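/- arXiv:1809.03643 — 2 statements merged into one kernel-verified Lean document; each statement's English description precedes it below -/
import Mathlib

section
/- Let p ≥ k ≥ 1. Let Q1 be a real p×k matrix and B1 a real p×(p−k) matrix with Q1·Q1ᵀ + B1·B1ᵀ = I_p, and let Q2 be a real p×k matrix with Q2ᵀQ2 = I_k. Then 1 − tr(Q2ᵀ·Q1·Q1ᵀ·Q2)/k ≤ ‖B1ᵀ·Q2‖₂² ≤ k − tr(Q2ᵀ·Q1·Q1ᵀ·Q2). In particular ‖B1ᵀQ2‖₂² is at least the squared distance D(M(Q2), M(Q1))² and at most k times that squared distance. -/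
open Matrix
open scoped Matrix.Norms.L2Operator

lemma col_sum_le_opNorm_sq {m n : ℕ} (M : Matrix (Fin m) (Fin n) ℝ) (i : Fin n) :
    ∑ j, (M j i) ^ 2 ≤ ‖M‖ ^ 2 := by
  classical
  set x : EuclideanSpace ℝ (Fin n) := EuclideanSpace.single i 1 with hx
  have hnx : ‖x‖ = 1 := by simp [hx]
  have h := M.l2_opNorm_mulVec x
  rw [hnx, mul_one] at h
  have hy : ∀ j, (M *ᵥ (x : Fin n → ℝ)) j = M j i := by
    intro j
    simp [Matrix.mulVec, dotProduct, hx, EuclideanSpace.single_apply]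
  have hnorm : ‖(EuclideanSpace.equiv (Fin m) ℝ).symm <| M *ᵥ x‖ ^ 2 = ∑ j, (M j i) ^ 2 := by
    rw [EuclideanSpace.norm_eq, Real.sq_sqrt (by positivity)]
    refine Finset.sum_congr rfl fun j _ => ?_
    have : ((EuclideanSpace.equiv (Fin m) ℝ).symm <| M *ᵥ x) j = M j i := hy j
    rw [this, Real.norm_eq_abs, sq_abs]
  calc ∑ j, (M j i) ^ 2 = ‖(EuclideanSpace.equiv (Fin m) ℝ).symm <| M *ᵥ x‖ ^ 2 := hnorm.symm
    _ ≤ ‖M‖ ^ 2 := by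
        have h0 : (0:ℝ) ≤ ‖(EuclideanSpace.equiv (Fin m) ℝ).symm <| M *ᵥ x‖ := norm_nonneg _
        nlinarith [norm_nonneg M]

lemma opNorm_sq_le_frobenius {m n : ℕ} (M : Matrix (Fin m) (Fin n) ℝ) :
    ‖M‖ ^ 2 ≤ ∑ j, ∑ i, (M j i) ^ 2 := by
  classical
  set F : ℝ := Real.sqrt (∑ j, ∑ i, (M j i) ^ 2) with hF
  have hFnn : 0 ≤ F := Real.sqrt_nonneg _
  have hFsq : F ^ 2 = ∑ j, ∑ i, (M j i) ^ 2 := Real.sq_sqrt (by positivity)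
  have hle : ‖M‖ ≤ F := by
    rw [Matrix.l2_opNorm_def]
    apply ContinuousLinearMap.opNorm_le_bound _ hFnn
    intro x
    set L := (Matrix.toEuclideanLin (𝕜 := ℝ) (m := Fin m) (n := Fin n)).trans
      LinearMap.toContinuousLinearMap with hL
    have hy : ∀ j, (L M x : EuclideanSpace ℝ (Fin m)) j = ∑ i, M j i * x i := fun j => rfl
    have hsq : ‖(L M x : EuclideanSpace ℝ (Fin m))‖ ^ 2 ≤ F ^ 2 * ‖x‖ ^ 2 := by
      rw [EuclideanSpace.norm_eq, Real.sq_sqrt (by positivity), hFsq]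
      have hxn : ‖x‖ ^ 2 = ∑ i, (x i) ^ 2 := by
        rw [EuclideanSpace.norm_eq, Real.sq_sqrt (by positivity)]
        simp [sq_abs]
      rw [hxn]
      have hbound : ∀ j, ‖(L M x : EuclideanSpace ℝ (Fin m)) j‖ ^ 2
          ≤ (∑ i, (M j i) ^ 2) * (∑ i, (x i) ^ 2) := by
        intro j
        rw [hy j]
        have := Finset.sum_mul_sq_le_sq_mul_sq Finset.univ (fun i => M j i) (fun i => x i)
        simpa [Real.norm_eq_abs, sq_abs] using this
      calc ∑ j, ‖(L M x : EuclideanSpace ℝ (Fin m)) j‖ ^ 2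
          ≤ ∑ j, (∑ i, (M j i) ^ 2) * (∑ i, (x i) ^ 2) := Finset.sum_le_sum fun j _ => hbound j
        _ = (∑ j, ∑ i, (M j i) ^ 2) * (∑ i, (x i) ^ 2) := by rw [← Finset.sum_mul]
    have h0 : (0:ℝ) ≤ F * ‖x‖ := mul_nonneg hFnn (norm_nonneg _)
    nlinarith [norm_nonneg (L M x)]
  calc ‖M‖ ^ 2 ≤ F ^ 2 := by nlinarith [norm_nonneg M]
    _ = _ := hFsq

/-- Let `p ≥ k ≥ 1`, let `Q1 : p × k` and `B1 : p × (p-k)` satisfy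
`Q1 Q1ᵀ + B1 B1ᵀ = I_p`, and let `Q2 : p × k` have orthonormal columns.  Then
`1 - tr(Q2ᵀ Q1 Q1ᵀ Q2)/k ≤ ‖B1ᵀ Q2‖₂² ≤ k - tr(Q2ᵀ Q1 Q1ᵀ Q2)`, i.e. `‖B1ᵀ Q2‖₂²` is
between the squared distance `D(M(Q2), M(Q1))²` and `k` times that squared distance. -/
theorem stmt_5 (p k : ℕ) (hk : 1 ≤ k) (hkp : k ≤ p)
    (Q1 : Matrix (Fin p) (Fin k) ℝ) (B1 : Matrix (Fin p) (Fin (p - k)) ℝ)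
    (hQB : Q1 * Q1ᵀ + B1 * B1ᵀ = 1)
    (Q2 : Matrix (Fin p) (Fin k) ℝ) (hQ2 : Q2ᵀ * Q2 = 1) :
    1 - Matrix.trace (Q2ᵀ * Q1 * Q1ᵀ * Q2) / (k : ℝ) ≤ ‖B1ᵀ * Q2‖ ^ 2 ∧
    ‖B1ᵀ * Q2‖ ^ 2 ≤ (k : ℝ) - Matrix.trace (Q2ᵀ * Q1 * Q1ᵀ * Q2) := by
  classical
  set M : Matrix (Fin (p - k)) (Fin k) ℝ := B1ᵀ * Q2 with hM
  set t : ℝ := ∑ i : Fin k, ∑ j : Fin (p - k), (M j i) ^ 2 with ht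
  have hkey : Matrix.trace (Q2ᵀ * Q1 * Q1ᵀ * Q2) + Matrix.trace (Mᵀ * M) = (k : ℝ) := by
    have h1 : Q2ᵀ * Q1 * Q1ᵀ * Q2 + Mᵀ * M = 1 := by
      have heq : Q2ᵀ * Q1 * Q1ᵀ * Q2 + Mᵀ * M = Q2ᵀ * (Q1 * Q1ᵀ + B1 * B1ᵀ) * Q2 := by
        rw [hM]
        simp only [Matrix.transpose_mul, Matrix.transpose_transpose, Matrix.mul_add,
          Matrix.add_mul, Matrix.mul_assoc]
      rw [heq, hQB, Matrix.mul_one, hQ2]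
    have h2 := congrArg Matrix.trace h1
    rw [Matrix.trace_add, Matrix.trace_one] at h2
    simpa using h2
  have htr : Matrix.trace (Mᵀ * M) = t := by
    rw [Matrix.trace, ht]
    congr 1
    funext i
    simp [Matrix.diag, Matrix.mul_apply, Matrix.transpose_apply, sq]
  have ht_eq : t = (k : ℝ) - Matrix.trace (Q2ᵀ * Q1 * Q1ᵀ * Q2) := by
    rw [← htr]; linarith
  have hupper : ‖M‖ ^ 2 ≤ t := by
    have h := opNorm_sq_le_frobenius M
    rw [ht, Finset.sum_comm]
    exact h
  have hlower : t ≤ (k : ℝ) * ‖M‖ ^ 2 := by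
    calc t = ∑ i : Fin k, ∑ j : Fin (p - k), (M j i) ^ 2 := ht
      _ ≤ ∑ _i : Fin k, ‖M‖ ^ 2 := Finset.sum_le_sum fun i _ => col_sum_le_opNorm_sq M i
      _ = (k : ℝ) * ‖M‖ ^ 2 := by simp [mul_comm]
  have hk0 : (0:ℝ) < k := by exact_mod_cast hk
  constructor
  · have hdiv : t / k ≤ ‖M‖ ^ 2 := by
      rw [div_le_iff₀ hk0]
      linarith [hlower]
    have h2 : 1 - Matrix.trace (Q2ᵀ * Q1 * Q1ᵀ * Q2) / k = t / k := by
      field_simp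
      linarith [ht_eq]
    linarith [hdiv, h2]
  · rw [← ht_eq]; exact hupper
end

section
/- Let p ≥ k ≥ 1 and d ≥ 0. Let Q1 be a real p×k matrix and B1 a real p×(p−k) matrix with Q1·Q1ᵀ + B1·B1ᵀ = I_p; let Q2 be a real p×k matrix with Q2ᵀQ2 = I_k; let Γ be an invertible real k×k matrix and set A2 = Q2·Γ. If the distance satisfies D(M(Q2), M(Q1)) = (1 − tr(Q2ᵀQ1Q1ᵀQ2)/k)^{1/2} ≥ d, then ‖B1ᵀ·A2‖₂ ≥ d / ‖Γ⁻¹‖₂. -/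
open Matrix
open scoped Matrix.Norms.L2Operator

lemma col_sq_sum_le (m n : ℕ) (M : Matrix (Fin m) (Fin n) ℝ) (j : Fin n) :
    ∑ i, M i j ^ 2 ≤ ‖M‖ ^ 2 := by
  have h := M.l2_opNorm_mulVec ((EuclideanSpace.equiv (Fin n) ℝ).symm (Pi.single j 1))
  have hx : ‖(EuclideanSpace.equiv (Fin n) ℝ).symm (Pi.single j 1)‖ = 1 := by
    simp [EuclideanSpace.norm_eq, Finset.sum_eq_single j, Pi.single_apply]
  rw [hx, mul_one] at h
  have hnn : (0:ℝ) ≤ ‖(EuclideanSpace.equiv (Fin m) ℝ).symm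
      (M *ᵥ (EuclideanSpace.equiv (Fin n) ℝ).symm (Pi.single j 1))‖ := norm_nonneg _
  have h2 := pow_le_pow_left₀ hnn h 2
  have hcol : ‖(EuclideanSpace.equiv (Fin m) ℝ).symm
      (M *ᵥ (EuclideanSpace.equiv (Fin n) ℝ).symm (Pi.single j 1))‖ ^ 2 = ∑ i, M i j ^ 2 := by
    rw [EuclideanSpace.norm_eq, Real.sq_sqrt (by positivity)]
    refine Finset.sum_congr rfl fun i _ => ?_
    have : (M *ᵥ (EuclideanSpace.single j (1:ℝ) : EuclideanSpace ℝ (Fin n))) i = M i j := by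
      simp [mulVec, dotProduct, EuclideanSpace.single_apply, Finset.sum_eq_single j]
    simp [this, sq_abs]
  rw [hcol] at h2
  exact h2

/-- Let `p ≥ k ≥ 1` and `d ≥ 0`.  Let `Q1 : p × k` and `B1 : p × (p-k)` satisfy
`Q1 Q1ᵀ + B1 B1ᵀ = I_p`, let `Q2 : p × k` have orthonormal columns, let `Γ` be an invertible
real `k × k` matrix and `A2 = Q2 Γ`.  If the distance
`D(M(Q2), M(Q1)) = (1 - tr(Q2ᵀ Q1 Q1ᵀ Q2)/k)^{1/2}` is at least `d`, then
`‖B1ᵀ A2‖₂ ≥ d / ‖Γ⁻¹‖₂`. -/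
theorem stmt_9 (p k : ℕ) (hk : 1 ≤ k) (hkp : k ≤ p) (d : ℝ) (hd : 0 ≤ d)
    (Q1 : Matrix (Fin p) (Fin k) ℝ) (B1 : Matrix (Fin p) (Fin (p - k)) ℝ)
    (hQB : Q1 * Q1ᵀ + B1 * B1ᵀ = 1)
    (Q2 : Matrix (Fin p) (Fin k) ℝ) (hQ2 : Q2ᵀ * Q2 = 1)
    (Γ : Matrix (Fin k) (Fin k) ℝ) (hΓ : IsUnit Γ)
    (A2 : Matrix (Fin p) (Fin k) ℝ) (hA2 : A2 = Q2 * Γ)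
    (hdist : d ≤ Real.sqrt (1 - Matrix.trace (Q2ᵀ * Q1 * Q1ᵀ * Q2) / (k : ℝ))) :
    d / ‖Γ⁻¹‖ ≤ ‖B1ᵀ * A2‖ := by
  set M : Matrix (Fin (p - k)) (Fin k) ℝ := B1ᵀ * Q2 with hM
  have hk0 : (0:ℝ) < k := by exact_mod_cast hk
  -- trace identity
  have hsum : Q2ᵀ * Q1 * Q1ᵀ * Q2 + Mᵀ * M = 1 := by
    have : Q2ᵀ * (Q1 * Q1ᵀ + B1 * B1ᵀ) * Q2 = Q2ᵀ * Q2 := by rw [hQB, Matrix.mul_one]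
    rw [hQ2] at this
    calc Q2ᵀ * Q1 * Q1ᵀ * Q2 + Mᵀ * M
        = Q2ᵀ * (Q1 * Q1ᵀ + B1 * B1ᵀ) * Q2 := by
          simp [hM, Matrix.transpose_mul, Matrix.add_mul, Matrix.mul_add, Matrix.mul_assoc]
      _ = 1 := this
  have htr : Matrix.trace (Q2ᵀ * Q1 * Q1ᵀ * Q2) = (k : ℝ) - Matrix.trace (Mᵀ * M) := by
    have := congrArg Matrix.trace hsum
    rw [Matrix.trace_add, Matrix.trace_one] at this
    simp at this
    linarith
  -- trace(MᵀM) ≤ k * ‖M‖²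
  have htrM : Matrix.trace (Mᵀ * M) ≤ (k : ℝ) * ‖M‖ ^ 2 := by
    have : Matrix.trace (Mᵀ * M) = ∑ j, ∑ i, M i j ^ 2 := by
      simp [Matrix.trace, Matrix.diag, Matrix.mul_apply, sq]
    rw [this]
    calc ∑ j : Fin k, ∑ i, M i j ^ 2 ≤ ∑ _j : Fin k, ‖M‖ ^ 2 :=
          Finset.sum_le_sum fun j _ => col_sq_sum_le _ _ M j
      _ = (k : ℝ) * ‖M‖ ^ 2 := by simp [mul_comm]
  -- d ≤ ‖M‖
  have hdM : d ≤ ‖M‖ := by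
    refine hdist.trans ?_
    have h1 : 1 - Matrix.trace (Q2ᵀ * Q1 * Q1ᵀ * Q2) / (k : ℝ) ≤ ‖M‖ ^ 2 := by
      rw [htr]
      rw [sub_div, div_self (ne_of_gt hk0)]
      have : Matrix.trace (Mᵀ * M) / (k : ℝ) ≤ ‖M‖ ^ 2 := by
        rw [div_le_iff₀ hk0]; linarith [htrM]
      linarith
    calc Real.sqrt (1 - Matrix.trace (Q2ᵀ * Q1 * Q1ᵀ * Q2) / (k : ℝ))
        ≤ Real.sqrt (‖M‖ ^ 2) := Real.sqrt_le_sqrt h1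
      _ = ‖M‖ := by rw [Real.sqrt_sq (norm_nonneg _)]
  -- M = (B1ᵀ * A2) * Γ⁻¹
  have hMeq : M = (B1ᵀ * A2) * Γ⁻¹ := by
    rw [hA2, ← Matrix.mul_assoc, Matrix.mul_assoc (B1ᵀ * Q2) Γ Γ⁻¹,
      Matrix.mul_nonsing_inv _ (Matrix.isUnit_iff_isUnit_det Γ |>.mp hΓ), Matrix.mul_one, hM]
  have hnorm : ‖M‖ ≤ ‖B1ᵀ * A2‖ * ‖Γ⁻¹‖ := by
    rw [hMeq]; exact Matrix.l2_opNorm_mul _ _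
  -- ‖Γ⁻¹‖ > 0
  have hΓinv : (0:ℝ) < ‖Γ⁻¹‖ := by
    rw [norm_pos_iff]
    intro h0
    have : (1 : Matrix (Fin k) (Fin k) ℝ) = 0 := by
      rw [← Matrix.mul_nonsing_inv _ (Matrix.isUnit_iff_isUnit_det Γ |>.mp hΓ), h0,
        Matrix.mul_zero]
    have := congrFun (congrFun this ⟨0, hk⟩) ⟨0, hk⟩
    simp [Matrix.one_apply] at this
  rw [div_le_iff₀ hΓinv]
  linarith
end
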